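/- arXiv:1202.3368 — 8 statements merged into one kernel-verified Lean document; each statement's English description precedes it below -/
import Mathlib

section
/- Let X = {1,…,n} with n ≥ 6 and define a metric d : X × X → {0,1,2} by d(x,y) = 1 iff y ∈ S(x), where S(1) = {2}, S(2) = {1,3,4,5}, S(3) = {2,4}, S(4) = {2,3,5}, S(5) = {2,4,6}, S(n) = {n−1}, and S(j) = {j−1, j+1} for 5 < j < n; d(x,y) = 2 for distinct x,y not related by S; d(x,x) = 0. Then the only isometry of (X,d) is the identity. -/
open Classical

/-- Auxiliary: a value-injective, adjacency-preserving map fixes `1,…,6`. -/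
lemma stmt2_small (n : ℕ) (hn : 6 ≤ n) (S : ℕ → ℕ → Prop)
    (hS : ∀ x y, S x y ↔
      (x = 1 ∧ y = 2) ∨
      (x = 2 ∧ (y = 1 ∨ y = 3 ∨ y = 4 ∨ y = 5)) ∨
      (x = 3 ∧ (y = 2 ∨ y = 4)) ∨
      (x = 4 ∧ (y = 2 ∨ y = 3 ∨ y = 5)) ∨
      (x = 5 ∧ (y = 2 ∨ y = 4 ∨ y = 6)) ∨
      (5 < x ∧ x < n ∧ (y = x - 1 ∨ y = x + 1)) ∨
      (x = n ∧ y = n - 1))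
    (g : {i : ℕ // 1 ≤ i ∧ i ≤ n} → {i : ℕ // 1 ≤ i ∧ i ≤ n})
    (hsurj : Function.Surjective g)
    (hinj : ∀ x y : {i : ℕ // 1 ≤ i ∧ i ≤ n}, (g x).1 = (g y).1 → x = y)
    (adj : ∀ x y : {i : ℕ // 1 ≤ i ∧ i ≤ n}, (S x.1 y.1 ↔ S (g x).1 (g y).1)) :
    ∀ x : {i : ℕ // 1 ≤ i ∧ i ≤ n}, x.1 ≤ 6 → (g x).1 = x.1 := by
  have himg : ∀ x y : {i : ℕ // 1 ≤ i ∧ i ≤ n}, x.1 ≠ y.1 → (g x).1 ≠ (g y).1 := by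
    intro x y hxy h
    exact hxy (congrArg Subtype.val (hinj _ _ h))
  -- neighborhood facts
  have hN1 : ∀ y, S 1 y → y = 2 := by intro y h; rw [hS] at h; omega
  have hN2 : ∀ y, S 2 y → y = 1 ∨ y = 3 ∨ y = 4 ∨ y = 5 := by
    intro y h; rw [hS] at h; omega
  have hN4 : ∀ y, S 4 y → y = 2 ∨ y = 3 ∨ y = 5 := by
    intro y h; rw [hS] at h; omega
  have hN5 : ∀ y, S 5 y → y = 2 ∨ y = 4 ∨ y = 6 := by
    intro y h; rw [hS] at h; omega
  have hNhi : ∀ x y, 5 < x → S x y → y = x - 1 ∨ y = x + 1 := by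
    intro x y hx h; rw [hS] at h; omega
  -- degree bounds
  have h3nb : ∀ x y, x ≠ 2 → S x y → y = x - 1 ∨ y = x + 1 ∨ y = 2 := by
    intro x y hx h; rw [hS] at h; omega
  have h2nb : ∀ x y, x ≠ 2 → x ≠ 4 → x ≠ 5 → S x y → y = x - 1 ∨ y = x + 1 := by
    intro x y hx2 hx4 hx5 h; rw [hS] at h; omega
  have hdeg4 : ∀ x a b c e, S x a → S x b → S x c → S x e →
      a ≠ b → a ≠ c → a ≠ e → b ≠ c → b ≠ e → c ≠ e → x = 2 := by
    intro x a b c e ha hb hc he hab hac hae hbc hbe hce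
    by_contra hx
    have h1 := h3nb _ _ hx ha
    have h2 := h3nb _ _ hx hb
    have h3 := h3nb _ _ hx hc
    have h4 := h3nb _ _ hx he
    omega
  have hdeg3 : ∀ x a b c, S x a → S x b → S x c →
      a ≠ b → a ≠ c → b ≠ c → x = 2 ∨ x = 4 ∨ x = 5 := by
    intro x a b c ha hb hc hab hac hbc
    by_contra hx
    push_neg at hx
    have h1 := h2nb _ _ hx.1 hx.2.1 hx.2.2 ha
    have h2 := h2nb _ _ hx.1 hx.2.1 hx.2.2 hb
    have h3 := h2nb _ _ hx.1 hx.2.1 hx.2.2 hc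
    omega
  -- vertices
  let v1 : {i : ℕ // 1 ≤ i ∧ i ≤ n} := ⟨1, by omega⟩
  let v2 : {i : ℕ // 1 ≤ i ∧ i ≤ n} := ⟨2, by omega⟩
  let v3 : {i : ℕ // 1 ≤ i ∧ i ≤ n} := ⟨3, by omega⟩
  let v4 : {i : ℕ // 1 ≤ i ∧ i ≤ n} := ⟨4, by omega⟩
  let v5 : {i : ℕ // 1 ≤ i ∧ i ≤ n} := ⟨5, by omega⟩
  let v6 : {i : ℕ // 1 ≤ i ∧ i ≤ n} := ⟨6, by omega⟩
  have e1 : v1.1 = 1 := rfl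
  have e2 : v2.1 = 2 := rfl
  have e3 : v3.1 = 3 := rfl
  have e4 : v4.1 = 4 := rfl
  have e5 : v5.1 = 5 := rfl
  have e6 : v6.1 = 6 := rfl
  -- distinctness of images of distinct vertices
  have himg : ∀ x y : {i : ℕ // 1 ≤ i ∧ i ≤ n}, x.1 ≠ y.1 → (g x).1 ≠ (g y).1 := by
    intro x y hxy h
    exact hxy (congrArg Subtype.val (hinj _ _ h))
  -- concrete adjacencies
  have s21 : S 2 1 := by rw [hS]; omega
  have s23 : S 2 3 := by rw [hS]; omega
  have s24 : S 2 4 := by rw [hS]; omega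
  have s25 : S 2 5 := by rw [hS]; omega
  have s42 : S 4 2 := by rw [hS]; omega
  have s43 : S 4 3 := by rw [hS]; omega
  have s45 : S 4 5 := by rw [hS]; omega
  have s52 : S 5 2 := by rw [hS]; omega
  have s54 : S 5 4 := by rw [hS]; omega
  have s56 : S 5 6 := by rw [hS]; omega
  have s34 : S 3 4 := by rw [hS]; omega
  -- Step 1 : g fixes 2
  have hg2 : g v2 = v2 := by
    have ha : S (g v2).1 (g v1).1 := (adj v2 v1).1 s21
    have hb : S (g v2).1 (g v3).1 := (adj v2 v3).1 s23
    have hc : S (g v2).1 (g v4).1 := (adj v2 v4).1 s24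
    have he : S (g v2).1 (g v5).1 := (adj v2 v5).1 s25
    exact Subtype.ext (hdeg4 _ _ _ _ _ ha hb hc he
      (himg v1 v3 (by omega)) (himg v1 v4 (by omega)) (himg v1 v5 (by omega))
      (himg v3 v4 (by omega)) (himg v3 v5 (by omega)) (himg v4 v5 (by omega)))
  -- Step 2 : g fixes 4
  have hg4 : g v4 = v4 := by
    have ha : S (g v4).1 (g v2).1 := (adj v4 v2).1 s42
    have hb : S (g v4).1 (g v3).1 := (adj v4 v3).1 s43
    have hc : S (g v4).1 (g v5).1 := (adj v4 v5).1 s45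
    have h3 : (g v4).1 = 2 ∨ (g v4).1 = 4 ∨ (g v4).1 = 5 :=
      hdeg3 _ _ _ _ ha hb hc
        (himg v2 v3 (by omega)) (himg v2 v5 (by omega)) (himg v3 v5 (by omega))
    have hne2 : (g v4).1 ≠ 2 := by
      have := himg v4 v2 (by omega)
      rw [hg2] at this
      omega
    have hne5 : (g v4).1 ≠ 5 := by
      intro h
      obtain ⟨z, hz⟩ := hsurj v6
      have h6 : S (g v4).1 (g z).1 := by
        rw [h, hz]; exact s56
      have hz4 : S 4 z.1 := (adj v4 z).2 h6
      rcases hN4 _ hz4 with h2 | h3' | h5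
      · have hzv : z = v2 := Subtype.ext (by omega)
        rw [hzv, hg2] at hz
        have := congrArg Subtype.val hz
        omega
      · have hs2z : S 2 z.1 := by rw [h3']; exact s23
        have h' : S (g v2).1 (g z).1 := (adj v2 z).1 hs2z
        rw [hg2, hz] at h'
        have := hN2 _ h'
        omega
      · have hs2z : S 2 z.1 := by rw [h5]; exact s25
        have h' : S (g v2).1 (g z).1 := (adj v2 z).1 hs2z
        rw [hg2, hz] at h'
        have := hN2 _ h'
        omega
    exact Subtype.ext (by omega)
  -- Step 3 : g fixes 5
  have hg5 : g v5 = v5 := by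
    have ha : S (g v5).1 (g v2).1 := (adj v5 v2).1 s52
    have hb : S (g v5).1 (g v4).1 := (adj v5 v4).1 s54
    have hc : S (g v5).1 (g v6).1 := (adj v5 v6).1 s56
    have h3 : (g v5).1 = 2 ∨ (g v5).1 = 4 ∨ (g v5).1 = 5 :=
      hdeg3 _ _ _ _ ha hb hc
        (himg v2 v4 (by omega)) (himg v2 v6 (by omega)) (himg v4 v6 (by omega))
    have hne2 : (g v5).1 ≠ 2 := by
      have := himg v5 v2 (by omega); rw [hg2] at this; omega
    have hne4 : (g v5).1 ≠ 4 := by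
      have := himg v5 v4 (by omega); rw [hg4] at this; omega
    exact Subtype.ext (by omega)
  -- Step 4 : g fixes 1
  have hg1 : g v1 = v1 := by
    have ha : S (g v2).1 (g v1).1 := (adj v2 v1).1 s21
    rw [hg2] at ha
    have hmem := hN2 _ ha
    have hne4 : (g v1).1 ≠ 4 := by
      have := himg v1 v4 (by omega); rw [hg4] at this; omega
    have hne5 : (g v1).1 ≠ 5 := by
      have := himg v1 v5 (by omega); rw [hg5] at this; omega
    have hne3 : (g v1).1 ≠ 3 := by
      intro h
      have h14 : S (g v1).1 (g v4).1 := by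
        rw [h, hg4]; exact s34
      have := hN1 _ ((adj v1 v4).2 h14)
      omega
    exact Subtype.ext (by omega)
  -- Step 5 : g fixes 3
  have hg3 : g v3 = v3 := by
    have ha : S (g v2).1 (g v3).1 := (adj v2 v3).1 s23
    rw [hg2] at ha
    have hmem := hN2 _ ha
    have hne1 : (g v3).1 ≠ 1 := by
      have := himg v3 v1 (by omega); rw [hg1] at this; omega
    have hne4 : (g v3).1 ≠ 4 := by
      have := himg v3 v4 (by omega); rw [hg4] at this; omega
    have hne5 : (g v3).1 ≠ 5 := by
      have := himg v3 v5 (by omega); rw [hg5] at this; omega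
    exact Subtype.ext (by omega)
  -- Step 6 : g fixes 6
  have hg6 : g v6 = v6 := by
    have ha : S (g v5).1 (g v6).1 := (adj v5 v6).1 s56
    rw [hg5] at ha
    have hmem := hN5 _ ha
    have hne2 : (g v6).1 ≠ 2 := by
      have := himg v6 v2 (by omega); rw [hg2] at this; omega
    have hne4 : (g v6).1 ≠ 4 := by
      have := himg v6 v4 (by omega); rw [hg4] at this; omega
    exact Subtype.ext (by omega)
  intro x hx6
  have hx1 := x.2.1
  have hx2 := x.2.2
  have : x.1 = 1 ∨ x.1 = 2 ∨ x.1 = 3 ∨ x.1 = 4 ∨ x.1 = 5 ∨ x.1 = 6 := by omega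
  rcases this with h | h | h | h | h | h
  · have hxv : x = v1 := Subtype.ext (by omega)
    rw [hxv, hg1]
  · have hxv : x = v2 := Subtype.ext (by omega)
    rw [hxv, hg2]
  · have hxv : x = v3 := Subtype.ext (by omega)
    rw [hxv, hg3]
  · have hxv : x = v4 := Subtype.ext (by omega)
    rw [hxv, hg4]
  · have hxv : x = v5 := Subtype.ext (by omega)
    rw [hxv, hg5]
  · have hxv : x = v6 := Subtype.ext (by omega)
    rw [hxv, hg6]

/-- Auxiliary: induction along the path for `j ≥ 6`. -/
lemma stmt2_key (n : ℕ) (hn : 6 ≤ n) (S : ℕ → ℕ → Prop)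
    (hS : ∀ x y, S x y ↔
      (x = 1 ∧ y = 2) ∨
      (x = 2 ∧ (y = 1 ∨ y = 3 ∨ y = 4 ∨ y = 5)) ∨
      (x = 3 ∧ (y = 2 ∨ y = 4)) ∨
      (x = 4 ∧ (y = 2 ∨ y = 3 ∨ y = 5)) ∨
      (x = 5 ∧ (y = 2 ∨ y = 4 ∨ y = 6)) ∨
      (5 < x ∧ x < n ∧ (y = x - 1 ∨ y = x + 1)) ∨
      (x = n ∧ y = n - 1))
    (g : {i : ℕ // 1 ≤ i ∧ i ≤ n} → {i : ℕ // 1 ≤ i ∧ i ≤ n})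
    (hinj : ∀ x y : {i : ℕ // 1 ≤ i ∧ i ≤ n}, (g x).1 = (g y).1 → x = y)
    (adj : ∀ x y : {i : ℕ // 1 ≤ i ∧ i ≤ n}, (S x.1 y.1 ↔ S (g x).1 (g y).1))
    (hsm : ∀ x : {i : ℕ // 1 ≤ i ∧ i ≤ n}, x.1 ≤ 6 → (g x).1 = x.1) :
    ∀ j : ℕ, ∀ x : {i : ℕ // 1 ≤ i ∧ i ≤ n}, x.1 = j → 6 ≤ j → g x = x := by
  have hNhi : ∀ x y, 5 < x → S x y → y = x - 1 ∨ y = x + 1 := by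
    intro x y hx h; rw [hS] at h; omega
  intro j
  induction j using Nat.strong_induction_on with
  | _ j ih =>
    intro x hx hj
    rcases Nat.eq_or_lt_of_le hj with h6 | h7
    · exact Subtype.ext (by rw [hsm x (by omega)])
    · -- j ≥ 7
      have hjn : j ≤ n := by rw [← hx]; exact x.2.2
      obtain ⟨w, ew⟩ : ∃ w : {i : ℕ // 1 ≤ i ∧ i ≤ n}, w.1 = j - 1 :=
        ⟨⟨j - 1, by omega⟩, rfl⟩
      have hw : g w = w := ih (j - 1) (by omega) w ew (by omega)
      have hadj : S (j - 1) j := by rw [hS]; omega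
      have hsw : S (g w).1 (g x).1 := (adj w x).1 (by rw [ew, hx]; exact hadj)
      rw [hw] at hsw
      have hmem := hNhi _ _ (by omega) hsw
      rw [ew] at hmem
      have hval : (g x).1 = j := by
        rcases hmem with hlo | hhi
        · exfalso
          by_cases h5 : j - 1 - 1 = 5
          · obtain ⟨u, eu⟩ : ∃ u : {i : ℕ // 1 ≤ i ∧ i ≤ n}, u.1 = 5 :=
              ⟨⟨5, by omega⟩, rfl⟩
            have hu : (g u).1 = 5 := by rw [hsm u (by omega)]; omega
            have hh : (g x).1 = (g u).1 := by omega
            have := congrArg Subtype.val (hinj _ _ hh)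
            omega
          · obtain ⟨u, eu⟩ : ∃ u : {i : ℕ // 1 ≤ i ∧ i ≤ n}, u.1 = j - 2 :=
              ⟨⟨j - 2, by omega⟩, rfl⟩
            have hu : g u = u := ih (j - 2) (by omega) u eu (by omega)
            have hh : (g x).1 = (g u).1 := by rw [hu]; omega
            have := congrArg Subtype.val (hinj _ _ hh)
            omega
        · omega
      exact Subtype.ext (by omega)

/-- For `n ≥ 6`, the `{0,1,2}`-valued metric on `{1,…,n}` determined by the
adjacency relation `S` (with `S(1)={2}`, `S(2)={1,3,4,5}`, `S(3)={2,4}`, `S(4)={2,3,5}`,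
`S(5)={2,4,6}`, `S(j)={j-1,j+1}` for `5 < j < n`, `S(n)={n-1}`) has trivial isometry
group. -/
theorem stmt2 (n : ℕ) (hn : 6 ≤ n)
    (S : ℕ → ℕ → Prop)
    (hS : ∀ x y, S x y ↔
      (x = 1 ∧ y = 2) ∨
      (x = 2 ∧ (y = 1 ∨ y = 3 ∨ y = 4 ∨ y = 5)) ∨
      (x = 3 ∧ (y = 2 ∨ y = 4)) ∨
      (x = 4 ∧ (y = 2 ∨ y = 3 ∨ y = 5)) ∨
      (x = 5 ∧ (y = 2 ∨ y = 4 ∨ y = 6)) ∨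
      (5 < x ∧ x < n ∧ (y = x - 1 ∨ y = x + 1)) ∨
      (x = n ∧ y = n - 1))
    (d : ℕ → ℕ → ℝ)
    (hd : ∀ x y, d x y = if x = y then 0 else if S x y then 1 else 2)
    (g : {i : ℕ // 1 ≤ i ∧ i ≤ n} → {i : ℕ // 1 ≤ i ∧ i ≤ n})
    (hg : Function.Bijective g)
    (hiso : ∀ x y, d (g x).1 (g y).1 = d x.1 y.1) :
    ∀ x, g x = x := by
  have hSirr : ∀ x, ¬ S x x := by
    intro x h; rw [hS] at h; omega
  have hinj : ∀ x y : {i : ℕ // 1 ≤ i ∧ i ≤ n}, (g x).1 = (g y).1 → x = y := by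
    intro x y h
    exact hg.1 (Subtype.ext h)
  have adj : ∀ x y : {i : ℕ // 1 ≤ i ∧ i ≤ n}, (S x.1 y.1 ↔ S (g x).1 (g y).1) := by
    intro x y
    by_cases hxy : x = y
    · subst hxy
      constructor
      · intro h; exact absurd h (hSirr _)
      · intro h; exact absurd h (hSirr _)
    · have hne : x.1 ≠ y.1 := fun h => hxy (Subtype.ext h)
      have hgne : (g x).1 ≠ (g y).1 := fun h => hxy (hinj _ _ h)
      have hI := hiso x y
      rw [hd, hd, if_neg hgne, if_neg hne] at hI
      constructor
      · intro h
        rw [if_pos h] at hI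
        by_contra h'
        rw [if_neg h'] at hI
        norm_num at hI
      · intro h
        rw [if_pos h] at hI
        by_contra h'
        rw [if_neg h'] at hI
        norm_num at hI
  have hsm := stmt2_small n hn S hS g hg.2 hinj adj
  have hkey := stmt2_key n hn S hS g hinj adj hsm
  intro x
  rcases Nat.lt_or_ge x.1 6 with hlt | hge
  · exact Subtype.ext (by rw [hsm x (by omega)])
  · exact hkey x.1 x rfl hge
end

section
/- Let X be a two-dimensional real normed vector space and a, b ∈ X. If the closed ball of radius 2 centered at 0 is contained in the union of the closed ball of radius 2 centered at b and the closed ball of radius 1 centered at a, then b = 0. -/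
/-!
Suppose `b ≠ 0`. The part of `B̄(0,r)` not covered by `B̄(b,r)` must lie in `B̄(a,s)`, so it is
enough to find two points of it at distance `≥ 2r > 2s`. Since the sphere of radius `r` is
connected, the intermediate value theorem applied to `z ↦ ‖z - b‖ - ‖z + b‖`, which changes sign
under `z ↦ -z`, gives `x` on it with `‖x - b‖ = ‖x + b‖`. If this common value exceeds `r`, the
antipodal points `x` and `-x` will do. Otherwise `x` lies on a flat piece of the sphere in
direction `b`, so the norm is `≥ r` on the whole line `x + ℝ b`. Walking from `x` along the line
in steps of `±b` until the next step leaves `B̄(0,r)` gives points `x - m b` and `x + n b`; then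
`x - m b` and `-(x + n b)` lie outside `B̄(b,r)`, and their difference is twice a point of the line.
-/

open Metric

section

variable {X : Type*} [NormedAddCommGroup X]

theorem mem_closedBall_zero_diff_closedBall {z b : X} {r : ℝ} :
    z ∈ closedBall 0 r \ closedBall b r ↔ ‖z‖ ≤ r ∧ r < ‖z - b‖ := by
  simp only [Set.mem_sdiff, mem_closedBall, dist_eq_norm, sub_zero, not_le]

variable [NormedSpace ℝ X]

theorem exists_mem_sphere_norm_sub_eq_norm_add (hX : 1 < Module.rank ℝ X) {r : ℝ} (hr : 0 ≤ r)
    (b : X) : ∃ x ∈ sphere (0 : X) r, ‖x - b‖ = ‖x + b‖ := by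
  have hconn := isConnected_sphere hX (0 : X) hr
  obtain ⟨x₀, hx₀⟩ := hconn.nonempty
  have hx₀' : -x₀ ∈ sphere (0 : X) r := by simpa using hx₀
  have hf : ContinuousOn (fun z : X => ‖z - b‖) (sphere 0 r) := by fun_prop
  have hg : ContinuousOn (fun z : X => ‖z + b‖) (sphere 0 r) := by fun_prop
  have hsub : ‖-x₀ - b‖ = ‖x₀ + b‖ := by rw [← norm_neg]; congr 1; abel
  have hadd : ‖-x₀ + b‖ = ‖x₀ - b‖ := by rw [← norm_neg]; congr 1; abel
  have hpre := hconn.isPreconnected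
  rcases le_total ‖x₀ - b‖ ‖x₀ + b‖ with hle | hle
  · exact hpre.intermediate_value₂ hx₀ hx₀' hf hg hle (by simpa only [hsub, hadd] using hle)
  · exact hpre.intermediate_value₂ hx₀' hx₀ hf hg (by simpa only [hsub, hadd] using hle) hle

theorem norm_le_norm_add_smul_of_nonneg {x b : X} (h : ‖x - b‖ ≤ ‖x‖) {t : ℝ} (ht : 0 ≤ t) :
    ‖x‖ ≤ ‖x + t • b‖ := by
  have hsplit : (1 + t) • x = (x + t • b) + t • (x - b) := by module
  have : (1 + t) * ‖x‖ ≤ ‖x + t • b‖ + t * ‖x - b‖ :=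
    calc (1 + t) * ‖x‖ = ‖(1 + t) • x‖ := by rw [norm_smul, Real.norm_of_nonneg (by linarith)]
      _ ≤ ‖x + t • b‖ + ‖t • (x - b)‖ := hsplit ▸ norm_add_le _ _
      _ = ‖x + t • b‖ + t * ‖x - b‖ := by rw [norm_smul, Real.norm_of_nonneg ht]
  nlinarith

theorem norm_le_norm_add_smul {x b : X} (hsub : ‖x - b‖ ≤ ‖x‖) (hadd : ‖x + b‖ ≤ ‖x‖) (t : ℝ) :
    ‖x‖ ≤ ‖x + t • b‖ := by
  rcases le_total 0 t with ht | ht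
  · exact norm_le_norm_add_smul_of_nonneg hsub ht
  · simpa using norm_le_norm_add_smul_of_nonneg (b := -b) (by simpa using hadd) (neg_nonneg.mpr ht)

theorem exists_nat_norm_add_smul_le_lt {x b : X} {r : ℝ} (hb : b ≠ 0) (hx : ‖x‖ ≤ r) :
    ∃ n : ℕ, ‖x + (n : ℝ) • b‖ ≤ r ∧ r < ‖x + ((n : ℝ) + 1) • b‖ := by
  by_contra! H
  have hle : ∀ n : ℕ, ‖x + (n : ℝ) • b‖ ≤ r := by
    intro n
    induction n with
    | zero => simpa using hx
    | succ n ih => exact_mod_cast H n ih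
  have hbpos : 0 < ‖b‖ := norm_pos_iff.mpr hb
  obtain ⟨n, hn⟩ := exists_nat_gt ((r + ‖x‖) / ‖b‖)
  have : (n : ℝ) * ‖b‖ ≤ r + ‖x‖ :=
    calc (n : ℝ) * ‖b‖ = ‖(x + (n : ℝ) • b) - x‖ := by
          rw [add_sub_cancel_left, norm_smul, Real.norm_natCast]
      _ ≤ ‖x + (n : ℝ) • b‖ + ‖x‖ := norm_sub_le _ _
      _ ≤ r + ‖x‖ := by linarith [hle n]
  rw [div_lt_iff₀ hbpos] at hn
  linarith

theorem exists_two_mul_le_dist_of_norm_add_le {x b : X} {r : ℝ} (hb : b ≠ 0) (hx : ‖x‖ = r)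
    (hsub : ‖x - b‖ ≤ r) (hadd : ‖x + b‖ ≤ r) :
    ∃ z ∈ closedBall 0 r \ closedBall b r, ∃ w ∈ closedBall 0 r \ closedBall b r,
      2 * r ≤ dist z w := by
  obtain ⟨m, hm, hm'⟩ := exists_nat_norm_add_smul_le_lt (neg_ne_zero.mpr hb) hx.le
  obtain ⟨n, hn, hn'⟩ := exists_nat_norm_add_smul_le_lt hb hx.le
  refine ⟨x + (m : ℝ) • -b, mem_closedBall_zero_diff_closedBall.mpr ⟨hm, ?_⟩,
    -(x + (n : ℝ) • b), mem_closedBall_zero_diff_closedBall.mpr ⟨by rwa [norm_neg], ?_⟩, ?_⟩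
  · convert hm' using 2; module
  · rwa [show -(x + (n : ℝ) • b) - b = -(x + ((n : ℝ) + 1) • b) by module, norm_neg]
  · have hmid := norm_le_norm_add_smul (x := x) (b := b) (by rwa [hx]) (by rwa [hx])
      (((n : ℝ) - m) / 2)
    rw [dist_eq_norm, show x + (m : ℝ) • -b - -(x + (n : ℝ) • b)
      = (2 : ℝ) • (x + (((n : ℝ) - m) / 2) • b) by module, norm_smul, Real.norm_two]
    linarith

theorem exists_two_mul_le_dist_of_ne_zero (hX : 1 < Module.rank ℝ X) {r : ℝ} (hr : 0 ≤ r)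
    {b : X} (hb : b ≠ 0) :
    ∃ z ∈ closedBall 0 r \ closedBall b r, ∃ w ∈ closedBall 0 r \ closedBall b r,
      2 * r ≤ dist z w := by
  obtain ⟨x, hx, hxb⟩ := exists_mem_sphere_norm_sub_eq_norm_add hX hr b
  rw [mem_sphere_zero_iff_norm] at hx
  rcases lt_or_ge r ‖x - b‖ with hfar | hnear
  · refine ⟨x, mem_closedBall_zero_diff_closedBall.mpr ⟨hx.le, hfar⟩,
      -x, mem_closedBall_zero_diff_closedBall.mpr ⟨by rw [norm_neg, hx], ?_⟩, ?_⟩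
    · rwa [show -x - b = -(x + b) by abel, norm_neg, ← hxb]
    · rw [dist_eq_norm, sub_neg_eq_add, ← two_smul ℝ, norm_smul, Real.norm_two, hx]
  · exact exists_two_mul_le_dist_of_norm_add_le hb hx hnear (hxb ▸ hnear)

theorem eq_zero_of_closedBall_subset_union (hX : 1 < Module.rank ℝ X) {r s : ℝ} (hr : 0 ≤ r)
    (hsr : s < r) {a b : X} (h : closedBall 0 r ⊆ closedBall b r ∪ closedBall a s) : b = 0 := by
  by_contra hb
  have hcover : closedBall 0 r \ closedBall b r ⊆ closedBall a s := Set.sdiff_subset_iff.mpr h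
  obtain ⟨z, hz, w, hw, hzw⟩ := exists_two_mul_le_dist_of_ne_zero hX hr hb
  have : dist z w ≤ 2 * s := by
    linarith [dist_triangle_right z w a, mem_closedBall.mp (hcover hz),
      mem_closedBall.mp (hcover hw)]
  linarith

end

/-- In a two-dimensional real normed space, if
`B̄(0,2) ⊆ B̄(b,2) ∪ B̄(a,1)` then `b = 0`. -/
theorem stmt4 {X : Type*} [NormedAddCommGroup X] [NormedSpace ℝ X]
    (hdim : Module.finrank ℝ X = 2) (a b : X)
    (h : Metric.closedBall (0 : X) 2 ⊆ Metric.closedBall b 2 ∪ Metric.closedBall a 1) :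
    b = 0 := by
  have hX : 1 < Module.rank ℝ X := by
    rw [(Module.rank_eq_ofNat_iff_finrank_eq_ofNat 2).mpr hdim]
    norm_num
  exact eq_zero_of_closedBall_subset_union hX zero_le_two one_lt_two h
end

section
/- Let X be a two-dimensional real normed vector space and a, b ∈ X with ‖a‖ = ‖b‖ = 2. If the closed ball of radius 1 around b is contained in the union of the closed ball of radius 2 around 0 and the closed ball of radius 1 around a, then a = b. -/
/-- In a two-dimensional real normed space, if `‖a‖ = ‖b‖ = 2` and
`B̄(b,1) ⊆ B̄(0,2) ∪ B̄(a,1)` then `a = b`. -/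
theorem stmt5 {X : Type*} [NormedAddCommGroup X] [NormedSpace ℝ X]
    (hdim : Module.finrank ℝ X = 2) (a b : X)
    (hna : ‖a‖ = 2) (hnb : ‖b‖ = 2)
    (h : Metric.closedBall b 1 ⊆ Metric.closedBall (0 : X) 2 ∪ Metric.closedBall a 1) :
    a = b := by
  have hhalf : ‖(2:ℝ)⁻¹ • b‖ = 1 := by
    rw [norm_smul, hnb]; norm_num
  have key : ∀ n : ℕ, ‖(n : ℝ) • (b - a) + (2:ℝ)⁻¹ • b‖ ≤ 1 := by
    intro n
    induction n with
    | zero => simp [hhalf]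
    | succ n ih =>
      set u : X := (n : ℝ) • (b - a) + (2:ℝ)⁻¹ • b with hu
      have hxmem : b + u ∈ Metric.closedBall b 1 := by
        simp [Metric.mem_closedBall, dist_eq_norm]
        simpa using ih
      have hxeq : b + u = ((n : ℝ) + 3/2) • b - (n : ℝ) • a := by
        rw [hu]; module
      have hxnorm : (3:ℝ) ≤ ‖b + u‖ := by
        have h1 : ‖((n : ℝ) + 3/2) • b‖ - ‖(n : ℝ) • a‖ ≤ ‖b + u‖ := by
          rw [hxeq]; exact norm_sub_norm_le _ _
        have h2 : ‖((n : ℝ) + 3/2) • b‖ = ((n : ℝ) + 3/2) * 2 := by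
          rw [norm_smul, hnb, Real.norm_of_nonneg (by positivity)]
        have h3 : ‖(n : ℝ) • a‖ = (n : ℝ) * 2 := by
          rw [norm_smul, hna, Real.norm_of_nonneg (by positivity)]
        rw [h2, h3] at h1; linarith
      have hnot : b + u ∉ Metric.closedBall (0 : X) 2 := by
        simp only [Metric.mem_closedBall, dist_zero_right, not_le]
        linarith
      have hmem : b + u ∈ Metric.closedBall a 1 := (h hxmem).resolve_left hnot
      have : ‖b + u - a‖ ≤ 1 := by
        simpa [Metric.mem_closedBall, dist_eq_norm] using hmem
      have heq : b + u - a = ((n : ℝ) + 1) • (b - a) + (2:ℝ)⁻¹ • b := by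
        rw [hu]; module
      rw [heq] at this
      simpa [Nat.cast_succ] using this
  by_contra hne
  have hd : 0 < ‖b - a‖ := by
    rw [norm_pos_iff, sub_ne_zero]; exact fun e => hne e.symm
  obtain ⟨n, hn⟩ := Archimedean.arch (3 : ℝ) hd
  have hbig : (3 : ℝ) ≤ (n : ℝ) * ‖b - a‖ := by
    simpa [nsmul_eq_mul] using hn
  have hle : (n : ℝ) * ‖b - a‖ ≤ 2 := by
    have h1 : ‖(n : ℝ) • (b - a)‖ ≤ ‖(n : ℝ) • (b - a) + (2:ℝ)⁻¹ • b‖ + ‖(2:ℝ)⁻¹ • b‖ := by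
      simpa using norm_sub_le ((n : ℝ) • (b - a) + (2:ℝ)⁻¹ • b) ((2:ℝ)⁻¹ • b)
    have h2 : ‖(n : ℝ) • (b - a)‖ = (n : ℝ) * ‖b - a‖ := by
      rw [norm_smul, Real.norm_of_nonneg (by positivity)]
    have := key n
    rw [h2, hhalf] at h1; linarith
  linarith
end

section
/- With the gluing construction above, if f₁ ∈ Iso(X₁,d₁) and f₂ ∈ Iso(X₂,d₂) satisfy f₁|_A = f₂|_A and f₁(A) = A, then the common extension f : X → X (equal to fᵢ on Xᵢ) is an isometry of (X,d). -/
/-- In the gluing construction of two metric spaces along the common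
closed nonempty set `A = X₁ ∩ X₂`, if `f₁ ∈ Iso(X₁,d₁)` and `f₂ ∈ Iso(X₂,d₂)` agree
on `A` and `f₁(A) = A`, then their common extension `f` (equal to `fᵢ` on `Xᵢ`) is a
bijective isometry of `(X, d)`. -/
theorem stmt7 {X : Type*} (X₁ X₂ : Set X) (hcover : X₁ ∪ X₂ = Set.univ)
    (A : Set X) (hA : A = X₁ ∩ X₂) (hAne : A.Nonempty)
    (d₁ d₂ : X → X → ℝ)
    (h₁sym : ∀ x ∈ X₁, ∀ y ∈ X₁, d₁ x y = d₁ y x)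
    (h₁eq : ∀ x ∈ X₁, ∀ y ∈ X₁, (d₁ x y = 0 ↔ x = y))
    (h₁tri : ∀ x ∈ X₁, ∀ y ∈ X₁, ∀ z ∈ X₁, d₁ x z ≤ d₁ x y + d₁ y z)
    (h₂sym : ∀ x ∈ X₂, ∀ y ∈ X₂, d₂ x y = d₂ y x)
    (h₂eq : ∀ x ∈ X₂, ∀ y ∈ X₂, (d₂ x y = 0 ↔ x = y))
    (h₂tri : ∀ x ∈ X₂, ∀ y ∈ X₂, ∀ z ∈ X₂, d₂ x z ≤ d₂ x y + d₂ y z)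
    (hagree : ∀ x ∈ A, ∀ y ∈ A, d₁ x y = d₂ x y)
    (h₁closed : ∀ x ∈ X₁, (∀ ε > 0, ∃ a ∈ A, d₁ x a < ε) → x ∈ A)
    (h₂closed : ∀ x ∈ X₂, (∀ ε > 0, ∃ a ∈ A, d₂ x a < ε) → x ∈ A)
    (d : X → X → ℝ)
    (hd₁ : ∀ x ∈ X₁, ∀ y ∈ X₁, d x y = d₁ x y)
    (hd₂ : ∀ x ∈ X₂, ∀ y ∈ X₂, d x y = d₂ x y)
    (hd₁₂ : ∀ x ∈ X₁ \ X₂, ∀ y ∈ X₂ \ X₁,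
      d x y = sInf {r : ℝ | ∃ a ∈ A, r = d₁ x a + d₂ a y})
    (hd₂₁ : ∀ x ∈ X₂ \ X₁, ∀ y ∈ X₁ \ X₂,
      d x y = sInf {r : ℝ | ∃ a ∈ A, r = d₂ x a + d₁ a y})
    (f₁ f₂ f : X → X)
    (hf₁ : Set.BijOn f₁ X₁ X₁)
    (hf₁iso : ∀ x ∈ X₁, ∀ y ∈ X₁, d₁ (f₁ x) (f₁ y) = d₁ x y)
    (hf₂ : Set.BijOn f₂ X₂ X₂)
    (hf₂iso : ∀ x ∈ X₂, ∀ y ∈ X₂, d₂ (f₂ x) (f₂ y) = d₂ x y)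
    (hagreeA : ∀ a ∈ A, f₁ a = f₂ a)
    (hfA : f₁ '' A = A)
    (hf₁' : ∀ x ∈ X₁, f x = f₁ x)
    (hf₂' : ∀ x ∈ X₂, f x = f₂ x) :
    Function.Bijective f ∧ ∀ x y, d (f x) (f y) = d x y := by

  have hAX₁ : A ⊆ X₁ := hA ▸ Set.inter_subset_left
  have hAX₂ : A ⊆ X₂ := hA ▸ Set.inter_subset_right
  have hf₂A : f₂ '' A = A := by
    rw [show f₂ '' A = f₁ '' A from Set.image_congr (fun a ha => (hagreeA a ha).symm), hfA]
  have hmem₁ : ∀ x ∈ X₁, f₁ x ∈ A → x ∈ A := by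
    intro x hx h
    rw [← hfA] at h
    obtain ⟨a, haA, hae⟩ := h
    exact hf₁.2.1 (hAX₁ haA) hx hae ▸ haA
  have hmem₂ : ∀ x ∈ X₂, f₂ x ∈ A → x ∈ A := by
    intro x hx h
    rw [← hf₂A] at h
    obtain ⟨a, haA, hae⟩ := h
    exact hf₂.2.1 (hAX₂ haA) hx hae ▸ haA
  have hXuniv : ∀ x : X, x ∈ X₁ ∪ X₂ := by intro x; rw [hcover]; trivial
  -- images of points in X₁ \ X₂ stay in X₁ \ X₂, etc.
  have him₁ : ∀ x ∈ X₁ \ X₂, f₁ x ∈ X₁ \ X₂ := by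
    rintro x ⟨hx1, hx2⟩
    refine ⟨hf₁.1 hx1, fun h => hx2 (hAX₂ (hmem₁ x hx1 ?_))⟩
    rw [hA]; exact ⟨hf₁.1 hx1, h⟩
  have him₂ : ∀ x ∈ X₂ \ X₁, f₂ x ∈ X₂ \ X₁ := by
    rintro x ⟨hx2, hx1⟩
    refine ⟨hf₂.1 hx2, fun h => hx1 (hAX₁ (hmem₂ x hx2 ?_))⟩
    rw [hA]; exact ⟨h, hf₂.1 hx2⟩
  constructor
  · constructor
    · intro x y hxy
      rcases hXuniv x with hx1 | hx2 <;> rcases hXuniv y with hy1 | hy2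
      · rw [hf₁' x hx1, hf₁' y hy1] at hxy
        exact hf₁.2.1 hx1 hy1 hxy
      · by_cases hy1 : y ∈ X₁
        · rw [hf₁' x hx1, hf₁' y hy1] at hxy
          exact hf₁.2.1 hx1 hy1 hxy
        by_cases hx2 : x ∈ X₂
        · rw [hf₂' x hx2, hf₂' y hy2] at hxy
          exact hf₂.2.1 hx2 hy2 hxy
        · exfalso
          rw [hf₁' x hx1, hf₂' y hy2] at hxy
          have hfyA : f₂ y ∈ A := by
            rw [hA]; exact ⟨hxy ▸ hf₁.1 hx1, hf₂.1 hy2⟩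
          exact hy1 (hAX₁ (hmem₂ y hy2 hfyA))
      · by_cases hx1 : x ∈ X₁
        · by_cases hy2' : y ∈ X₂
          · rw [hf₂' x hx2, hf₂' y hy2'] at hxy
            exact hf₂.2.1 hx2 hy2' hxy
          · rw [hf₁' x hx1, hf₁' y hy1] at hxy
            exact hf₁.2.1 hx1 hy1 hxy
        by_cases hy2 : y ∈ X₂
        · rw [hf₂' x hx2, hf₂' y hy2] at hxy
          exact hf₂.2.1 hx2 hy2 hxy
        · exfalso
          rw [hf₂' x hx2, hf₁' y hy1] at hxy
          have hfxA : f₂ x ∈ A := by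
            rw [hA]; exact ⟨hxy ▸ hf₁.1 hy1, hf₂.1 hx2⟩
          exact hx1 (hAX₁ (hmem₂ x hx2 hfxA))
      · rw [hf₂' x hx2, hf₂' y hy2] at hxy
        exact hf₂.2.1 hx2 hy2 hxy
    · intro z
      rcases hXuniv z with hz1 | hz2
      · obtain ⟨x, hx1, hxe⟩ := hf₁.2.2 hz1
        exact ⟨x, by rw [hf₁' x hx1, hxe]⟩
      · obtain ⟨x, hx2, hxe⟩ := hf₂.2.2 hz2
        exact ⟨x, by rw [hf₂' x hx2, hxe]⟩
  · have hset : ∀ x ∈ X₁, ∀ y ∈ X₂,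
        {r : ℝ | ∃ a ∈ A, r = d₁ (f₁ x) a + d₂ a (f₂ y)}
          = {r : ℝ | ∃ a ∈ A, r = d₁ x a + d₂ a y} := by
      intro x hx y hy
      ext r
      constructor
      · rintro ⟨a, haA, rfl⟩
        rw [← hfA] at haA
        obtain ⟨b, hbA, rfl⟩ := haA
        refine ⟨b, hbA, ?_⟩
        rw [hf₁iso x hx b (hAX₁ hbA), hagreeA b hbA, hf₂iso b (hAX₂ hbA) y hy]
      · rintro ⟨a, haA, rfl⟩
        refine ⟨f₁ a, hfA ▸ Set.mem_image_of_mem f₁ haA, ?_⟩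
        rw [hf₁iso x hx a (hAX₁ haA), hagreeA a haA, hf₂iso a (hAX₂ haA) y hy]
    have hset' : ∀ x ∈ X₂, ∀ y ∈ X₁,
        {r : ℝ | ∃ a ∈ A, r = d₂ (f₂ x) a + d₁ a (f₁ y)}
          = {r : ℝ | ∃ a ∈ A, r = d₂ x a + d₁ a y} := by
      intro x hx y hy
      ext r
      constructor
      · rintro ⟨a, haA, rfl⟩
        rw [← hfA] at haA
        obtain ⟨b, hbA, rfl⟩ := haA
        refine ⟨b, hbA, ?_⟩
        rw [hagreeA b hbA, hf₂iso x hx b (hAX₂ hbA), ← hagreeA b hbA,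
          hf₁iso b (hAX₁ hbA) y hy]
      · rintro ⟨a, haA, rfl⟩
        refine ⟨f₁ a, hfA ▸ Set.mem_image_of_mem f₁ haA, ?_⟩
        rw [hagreeA a haA, hf₂iso x hx a (hAX₂ haA), ← hagreeA a haA,
          hf₁iso a (hAX₁ haA) y hy]
    intro x y
    rcases hXuniv x with hx1 | hx2
    · by_cases hx2 : x ∈ X₂
      · rcases hXuniv y with hy1 | hy2
        · by_cases hy2 : y ∈ X₂
          · rw [hf₂' x hx2, hf₂' y hy2, hd₂ _ (hf₂.1 hx2) _ (hf₂.1 hy2),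
              hf₂iso x hx2 y hy2, hd₂ x hx2 y hy2]
          · rw [hf₁' x hx1, hf₁' y hy1, hd₁ _ (hf₁.1 hx1) _ (hf₁.1 hy1),
              hf₁iso x hx1 y hy1, hd₁ x hx1 y hy1]
        · rw [hf₂' x hx2, hf₂' y hy2, hd₂ _ (hf₂.1 hx2) _ (hf₂.1 hy2),
            hf₂iso x hx2 y hy2, hd₂ x hx2 y hy2]
      · rcases hXuniv y with hy1 | hy2
        · rw [hf₁' x hx1, hf₁' y hy1, hd₁ _ (hf₁.1 hx1) _ (hf₁.1 hy1),
            hf₁iso x hx1 y hy1, hd₁ x hx1 y hy1]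
        · by_cases hy1 : y ∈ X₁
          · rw [hf₁' x hx1, hf₁' y hy1, hd₁ _ (hf₁.1 hx1) _ (hf₁.1 hy1),
              hf₁iso x hx1 y hy1, hd₁ x hx1 y hy1]
          · rw [hf₁' x hx1, hf₂' y hy2,
              hd₁₂ _ (him₁ x ⟨hx1, hx2⟩) _ (him₂ y ⟨hy2, hy1⟩),
              hd₁₂ x ⟨hx1, hx2⟩ y ⟨hy2, hy1⟩, hset x hx1 y hy2]
    · by_cases hx1 : x ∈ X₁
      · rcases hXuniv y with hy1 | hy2
        · rw [hf₁' x hx1, hf₁' y hy1, hd₁ _ (hf₁.1 hx1) _ (hf₁.1 hy1),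
            hf₁iso x hx1 y hy1, hd₁ x hx1 y hy1]
        · rw [hf₂' x hx2, hf₂' y hy2, hd₂ _ (hf₂.1 hx2) _ (hf₂.1 hy2),
            hf₂iso x hx2 y hy2, hd₂ x hx2 y hy2]
      · by_cases hy2 : y ∈ X₂
        · rw [hf₂' x hx2, hf₂' y hy2, hd₂ _ (hf₂.1 hx2) _ (hf₂.1 hy2),
            hf₂iso x hx2 y hy2, hd₂ x hx2 y hy2]
        · have hy1 : y ∈ X₁ := (hXuniv y).resolve_right hy2
          rw [hf₂' x hx2, hf₁' y hy1,
            hd₂₁ _ (him₂ x ⟨hx2, hx1⟩) _ (him₁ y ⟨hy1, hy2⟩),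
            hd₂₁ x ⟨hx2, hx1⟩ y ⟨hy1, hy2⟩, hset' x hx2 y hy1]
end

section
/- Let f : X × X → [0,∞) satisfy: f(x,x) = 0, f(x,y) = f(y,x) > 0 for x ≠ y, and whenever f(x,y), f(y,z), f(z,w) are all ≤ ε, then f(x,w) ≤ 2ε. Define d(x,y) = inf over chains x = z₀, z₁, …, zₙ = y of ∑ f(z_{j-1}, z_j). Then d is a metric on X and (1/2) f(x,y) ≤ d(x,y) ≤ f(x,y) for all x, y. -/
/-!
The lower bound `f x y / 2 ≤ d x y` is Frink's lemma. Given a chain `z₀, …, zₙ` of total length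
`S`, cut it at the last `k` for which `z₀, …, z_k` has length at most `S / 2`; then the tail
`z_{k+1}, …, zₙ` also has length at most `S / 2`. By induction `f(z₀, z_k)`, `f(z_k, z_{k+1})` and
`f(z_{k+1}, zₙ)` are all at most `S`, and the chain condition gives `f(z₀, zₙ) ≤ 2S`.
The one-step chain gives `d ≤ f`, reversing chains gives symmetry and concatenating them gives the
triangle inequality.
-/

open Finset
open scoped Pointwise

theorem exists_sum_range_le_half_and_sum_Ico_le_half (a : ℕ → ℝ) {n : ℕ} (hn : 0 < n)
    (hS : 0 ≤ ∑ j ∈ range n, a j) :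
    ∃ k < n, ∑ j ∈ range k, a j ≤ (∑ j ∈ range n, a j) / 2 ∧
      ∑ j ∈ Ico (k + 1) n, a j ≤ (∑ j ∈ range n, a j) / 2 := by
  set S := ∑ j ∈ range n, a j
  set k := Nat.findGreatest (fun k => ∑ j ∈ range k, a j ≤ S / 2) (n - 1)
  have hk : k < n := (Nat.findGreatest_le _).trans_lt (by omega)
  have hhead : ∑ j ∈ range k, a j ≤ S / 2 :=
    Nat.findGreatest_spec (P := fun k => ∑ j ∈ range k, a j ≤ S / 2) (Nat.zero_le _)
      (by simp only [range_zero, sum_empty]; linarith)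
  refine ⟨k, hk, hhead, ?_⟩
  rcases (Nat.succ_le_of_lt hk).eq_or_lt with hlast | hnext
  · rw [← hlast, Ico_self, sum_empty]
    linarith
  · have hsplit := sum_range_add_sum_Ico a hnext.le
    have : ¬ ∑ j ∈ range (k + 1), a j ≤ S / 2 :=
      Nat.findGreatest_is_greatest (Nat.lt_succ_self k) (by omega)
    linarith

def WeakChainCondition {X : Type*} (f : X → X → ℝ) : Prop :=
  ∀ (ε : ℝ) (x y z w : X), f x y ≤ ε → f y z ≤ ε → f z w ≤ ε → f x w ≤ 2 * ε

theorem WeakChainCondition.le_two_mul_sum {X : Type*} {f : X → X → ℝ}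
    (hf : WeakChainCondition f) (hnn : ∀ x y, 0 ≤ f x y) (hself : ∀ x, f x x = 0) (n : ℕ)
    (z : ℕ → X) : f (z 0) (z n) ≤ 2 * ∑ j ∈ range n, f (z j) (z (j + 1)) := by
  induction n using Nat.strong_induction_on generalizing z with
  | _ n ih =>
  rcases Nat.eq_zero_or_pos n with rfl | hn
  · simp [hself]
  set S := ∑ j ∈ range n, f (z j) (z (j + 1))
  obtain ⟨k, hk, hhead, htail⟩ := exists_sum_range_le_half_and_sum_Ico_le_half
    (fun j => f (z j) (z (j + 1))) hn (sum_nonneg fun _ _ => hnn _ _)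
  have h₁ : f (z 0) (z k) ≤ S := by linarith [ih k hk z]
  have h₂ : f (z k) (z (k + 1)) ≤ S :=
    single_le_sum (f := fun j => f (z j) (z (j + 1))) (fun _ _ => hnn _ _) (mem_range.2 hk)
  have h₃ : f (z (k + 1)) (z n) ≤ S := by
    have := ih (n - (k + 1)) (by omega) (fun j => z (k + 1 + j))
    rw [show k + 1 + (n - (k + 1)) = n by omega, add_zero] at this
    simp only [← add_assoc] at this
    rw [sum_Ico_eq_sum_range] at htail
    linarith
  exact hf S _ _ _ _ h₁ h₂ h₃

namespace ChainMetric

variable {X : Type*} (f : X → X → ℝ)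

def lengths (x y : X) : Set ℝ :=
  {r : ℝ | ∃ (n : ℕ) (z : ℕ → X), 1 ≤ n ∧ z 0 = x ∧ z n = y ∧
    r = ∑ j ∈ range n, f (z j) (z (j + 1))}

noncomputable def dist (x y : X) : ℝ := sInf (lengths f x y)

theorem self_mem_lengths (x y : X) : f x y ∈ lengths f x y :=
  ⟨1, fun j => if j = 0 then x else y, le_rfl, by simp, by simp, by simp⟩

theorem lengths_nonempty (x y : X) : (lengths f x y).Nonempty := ⟨_, self_mem_lengths f x y⟩

theorem lengths_swap_subset (hsym : ∀ x y, f x y = f y x) (x y : X) :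
    lengths f y x ⊆ lengths f x y := by
  rintro r ⟨n, z, hn, rfl, rfl, rfl⟩
  refine ⟨n, fun j => z (n - j), hn, by simp, by simp, ?_⟩
  rw [← sum_range_reflect]
  refine sum_congr rfl fun j hj => ?_
  have hj := mem_range.1 hj
  simp only [show n - j = n - 1 - j + 1 by omega, show n - (j + 1) = n - 1 - j by omega, hsym]

theorem lengths_comm (hsym : ∀ x y, f x y = f y x) (x y : X) :
    lengths f y x = lengths f x y :=
  (lengths_swap_subset f hsym x y).antisymm (lengths_swap_subset f hsym y x)

theorem lengths_add_subset (x y w : X) : lengths f x y + lengths f y w ⊆ lengths f x w := by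
  rintro _ ⟨_, ⟨n, z, hn, rfl, rfl, rfl⟩, _, ⟨m, z', hm, hz', rfl, rfl⟩, rfl⟩
  refine ⟨n + m, fun j => if j < n then z j else z' (j - n), by omega, if_pos hn, by simp, ?_⟩
  rw [sum_range_add]
  congr 1
  · refine sum_congr rfl fun j hj => ?_
    have hj := mem_range.1 hj
    rcases (Nat.succ_le_of_lt hj).eq_or_lt with hlast | hnext
    · simp [← hlast, hz']
    · simp [hj, hnext]
  · refine sum_congr rfl fun j _ => ?_
    simp [add_assoc]

theorem half_le_of_mem_lengths (hf : WeakChainCondition f) (hnn : ∀ x y, 0 ≤ f x y)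
    (hself : ∀ x, f x x = 0) {x y : X} {r : ℝ} (hr : r ∈ lengths f x y) :
    1 / 2 * f x y ≤ r := by
  obtain ⟨n, z, -, rfl, rfl, rfl⟩ := hr
  linarith [hf.le_two_mul_sum hnn hself n z]

theorem nonneg_of_mem_lengths (hnn : ∀ x y, 0 ≤ f x y) {x y : X} {r : ℝ}
    (hr : r ∈ lengths f x y) : 0 ≤ r := by
  obtain ⟨n, z, -, -, -, rfl⟩ := hr
  exact sum_nonneg fun _ _ => hnn _ _

theorem lengths_bddBelow (hnn : ∀ x y, 0 ≤ f x y) (x y : X) : BddBelow (lengths f x y) :=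
  ⟨0, fun _ => nonneg_of_mem_lengths f hnn⟩

theorem dist_nonneg (hnn : ∀ x y, 0 ≤ f x y) (x y : X) : 0 ≤ dist f x y :=
  Real.sInf_nonneg fun _ => nonneg_of_mem_lengths f hnn

theorem dist_le (hnn : ∀ x y, 0 ≤ f x y) (x y : X) : dist f x y ≤ f x y :=
  csInf_le (lengths_bddBelow f hnn x y) (self_mem_lengths f x y)

theorem half_le_dist (hf : WeakChainCondition f) (hnn : ∀ x y, 0 ≤ f x y)
    (hself : ∀ x, f x x = 0) (x y : X) : 1 / 2 * f x y ≤ dist f x y :=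
  le_csInf (lengths_nonempty f x y) fun _ => half_le_of_mem_lengths f hf hnn hself

theorem dist_comm (hsym : ∀ x y, f x y = f y x) (x y : X) : dist f x y = dist f y x := by
  rw [dist, dist, lengths_comm f hsym]

theorem dist_triangle (hnn : ∀ x y, 0 ≤ f x y) (x y w : X) :
    dist f x w ≤ dist f x y + dist f y w := by
  rw [dist, dist, dist, ← csInf_add (lengths_nonempty f x y) (lengths_bddBelow f hnn x y)
    (lengths_nonempty f y w) (lengths_bddBelow f hnn y w)]
  exact csInf_le_csInf (lengths_bddBelow f hnn x w)
    ((lengths_nonempty f x y).add (lengths_nonempty f y w)) (lengths_add_subset f x y w)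

theorem dist_eq_zero_iff (hf : WeakChainCondition f) (hnn : ∀ x y, 0 ≤ f x y)
    (hself : ∀ x, f x x = 0) (hpos : ∀ x y, x ≠ y → 0 < f x y) (x y : X) :
    dist f x y = 0 ↔ x = y := by
  refine ⟨fun h => ?_, fun h => ?_⟩
  · by_contra hne
    linarith [hpos x y hne, half_le_dist f hf hnn hself x y]
  · subst h
    exact le_antisymm ((dist_le f hnn x x).trans_eq (hself x)) (dist_nonneg f hnn x x)

end ChainMetric

/-- If `f : X × X → [0,∞)` is symmetric, vanishes exactly on the diagonal
and satisfies the chain condition (`f(x,y), f(y,z), f(z,w) ≤ ε` implies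
`f(x,w) ≤ 2ε`), then the chain metric
`d(x,y) = inf over chains x = z₀, …, zₙ = y of ∑ f(z_{j-1}, z_j)` is a metric on `X`
and `(1/2) f(x,y) ≤ d(x,y) ≤ f(x,y)` for all `x, y`. -/
theorem stmt8 {X : Type*} (f : X → X → ℝ)
    (hnn : ∀ x y, 0 ≤ f x y)
    (hself : ∀ x, f x x = 0)
    (hsym : ∀ x y, f x y = f y x)
    (hpos : ∀ x y, x ≠ y → 0 < f x y)
    (hchain : ∀ (ε : ℝ) (x y z w : X),
      f x y ≤ ε → f y z ≤ ε → f z w ≤ ε → f x w ≤ 2 * ε)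
    (d : X → X → ℝ)
    (hd : ∀ x y, d x y = sInf {r : ℝ | ∃ (n : ℕ) (z : ℕ → X), 1 ≤ n ∧ z 0 = x ∧
      z n = y ∧ r = ∑ j ∈ Finset.range n, f (z j) (z (j + 1))}) :
    ((∀ x y, 0 ≤ d x y) ∧ (∀ x y, d x y = d y x) ∧ (∀ x y, d x y = 0 ↔ x = y) ∧
      (∀ x y z, d x z ≤ d x y + d y z)) ∧
    ∀ x y, (1 / 2) * f x y ≤ d x y ∧ d x y ≤ f x y := by
  obtain rfl : d = ChainMetric.dist f := funext₂ hd
  exact ⟨⟨ChainMetric.dist_nonneg f hnn, ChainMetric.dist_comm f hsym,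
    ChainMetric.dist_eq_zero_iff f hchain hnn hself hpos, ChainMetric.dist_triangle f hnn⟩,
    fun x y => ⟨ChainMetric.half_le_dist f hchain hnn hself x y, ChainMetric.dist_le f hnn x y⟩⟩
end

section
/- The Cartesian product of an arbitrary family of G_δ-complete topological groups is G_δ-complete. -/
/-- The topology generated by the `G_δ`-subsets of `(G, t)`. -/
def gdeltaTopology {G : Type*} (t : TopologicalSpace G) : TopologicalSpace G :=
  TopologicalSpace.generateFrom
    {s : Set G | ∃ f : ℕ → Set G, (∀ n, @IsOpen G t (f n)) ∧ s = ⋂ n, f n}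

/-- A topological group is Raïkov-complete if every filter which is Cauchy with
respect to the two-sided (upper) uniformity — i.e. admits arbitrarily small sets
for both the left and the right uniformity — converges. -/
def RaikovComplete (G : Type*) [Group G] [TopologicalSpace G] : Prop :=
  ∀ F : Filter G, F.NeBot →
    (∀ U ∈ nhds (1 : G), ∃ S ∈ F, ∀ x ∈ S, ∀ y ∈ S, x * y⁻¹ ∈ U ∧ x⁻¹ * y ∈ U) →
    ∃ x : G, F ≤ nhds x

/-- A topological group `(G, t)` is `G_δ`-complete if `G` equipped with the topology
generated by `G_δ`-sets is Raïkov-complete. -/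
def GDeltaComplete (G : Type*) [Group G] [t : TopologicalSpace G] : Prop :=
  @RaikovComplete G _ (gdeltaTopology t)

/-!
The coordinate images of a Cauchy filter `F` on `∏ Gᵢ` are Cauchy for the `G_δ`-topologies of
the factors, hence converge to some `xᵢ`. A `G_δ`-neighbourhood of `x` contains a box constraining
only countably many coordinates, `y (j k) ∈ u k`. Choosing open `W k ∋ 1` with
`x (j k) • W k * W k ⊆ u k`, the set `{z | ∀ k, z (j k) ∈ W k}` is a `G_δ`-neighbourhood of `1`,
and a member `S` of `F` that is small for it lies in the box: for each `k` some `a ∈ S` has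
`a (j k) ∈ x (j k) • W k`, and every `b ∈ S` satisfies `b = a * (a⁻¹ * b)`.
-/

open Filter Set Topology Pointwise

universe u

section GDelta

variable {X Y : Type*}

theorem gdeltaTopology_le (t : TopologicalSpace X) : gdeltaTopology t ≤ t :=
  fun s hs =>
    TopologicalSpace.isOpen_generateFrom_of_mem ⟨fun _ => s, fun _ => hs, (iInter_const s).symm⟩

theorem Continuous.gdeltaTopology {tX : TopologicalSpace X} {tY : TopologicalSpace Y} {f : X → Y}
    (hf : Continuous[tX, tY] f) : Continuous[gdeltaTopology tX, gdeltaTopology tY] f := by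
  refine continuous_generateFrom_iff.2 ?_
  rintro _ ⟨g, hg, rfl⟩
  rw [preimage_iInter]
  exact TopologicalSpace.isOpen_generateFrom_of_mem ⟨_, fun n => (hg n).preimage hf, rfl⟩

theorem mem_nhds_gdeltaTopology_iff {t : TopologicalSpace X} {x : X} {A : Set X} :
    A ∈ @nhds X (gdeltaTopology t) x ↔ ∃ s, @IsGδ X t s ∧ x ∈ s ∧ s ⊆ A := by
  have hgen : {s : Set X | ∃ f : ℕ → Set X, (∀ n, IsOpen[t] (f n)) ∧ s = ⋂ n, f n} =
      {s | @IsGδ X t s} := by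
    ext s
    exact (isGδ_iff_eq_iInter_nat).symm
  rw [gdeltaTopology, hgen, TopologicalSpace.nhds_generateFrom, mem_biInf_of_directed]
  · simp only [mem_principal]
    exact ⟨fun ⟨s, ⟨hx, hs⟩, hsA⟩ => ⟨s, hs, hx, hsA⟩, fun ⟨s, hs, hx, hsA⟩ => ⟨s, ⟨hx, hs⟩, hsA⟩⟩
  · rintro s ⟨hxs, hs⟩ s' ⟨hxs', hs'⟩
    exact ⟨s ∩ s', ⟨⟨hxs, hxs'⟩, hs.inter hs'⟩, principal_mono.2 inter_subset_left,
      principal_mono.2 inter_subset_right⟩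
  · exact ⟨univ, mem_univ x, IsGδ.univ⟩

end GDelta

/-- The Cauchy condition in `RaikovComplete`. -/
def IsRaikovCauchy {G : Type*} [Group G] (t : TopologicalSpace G) (F : Filter G) : Prop :=
  ∀ U ∈ @nhds G t 1, ∃ S ∈ F, ∀ x ∈ S, ∀ y ∈ S, x * y⁻¹ ∈ U ∧ x⁻¹ * y ∈ U

theorem IsRaikovCauchy.map {G H : Type*} [Group G] [Group H] {tG : TopologicalSpace G}
    {tH : TopologicalSpace H} {F : Filter G} (hF : IsRaikovCauchy tG F) (f : G →* H)
    (hf : Continuous[tG, tH] f) : IsRaikovCauchy tH (F.map f) := by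
  intro U hU
  have hfU : f ⁻¹' U ∈ @nhds G tG 1 := hf.continuousAt.preimage_mem_nhds (by rwa [map_one])
  obtain ⟨S, hS, hSU⟩ := hF _ hfU
  refine ⟨f '' S, image_mem_map hS, ?_⟩
  rintro _ ⟨a, ha, rfl⟩ _ ⟨b, hb, rfl⟩
  simpa only [mem_preimage, map_mul, map_inv] using hSU a ha b hb

theorem exists_open_nhds_one_smul_mul_subset {G : Type*} [TopologicalSpace G] [Group G]
    [IsTopologicalGroup G] {x : G} {u : Set G} (hu : u ∈ 𝓝 x) :
    ∃ W : Set G, IsOpen W ∧ 1 ∈ W ∧ x • W * W ⊆ u := by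
  have hu' : x⁻¹ • u ∈ 𝓝 (1 : G) := by
    simpa using smul_mem_nhds_smul x⁻¹ hu
  obtain ⟨W, hWo, hW1, hWW⟩ := exists_open_nhds_one_mul_subset hu'
  refine ⟨W, hWo, hW1, ?_⟩
  rw [smul_mul_assoc]
  exact smul_set_subset_iff_subset_inv_smul_set.2 hWW

theorem IsGδ.exists_countable_box_subset {ι : Type u} {X : ι → Type*}
    [∀ i, TopologicalSpace (X i)] {s : Set (∀ i, X i)} (hs : IsGδ s) {x : ∀ i, X i} (hx : x ∈ s) :
    ∃ (K : Type u) (_ : Countable K) (j : K → ι) (u : ∀ k, Set (X (j k))),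
      (∀ k, IsOpen (u k) ∧ x (j k) ∈ u k) ∧ {y | ∀ k, y (j k) ∈ u k} ⊆ s := by
  obtain ⟨f, hfo, rfl⟩ := hs.eq_iInter_nat
  choose I u hu hIu using fun n => isOpen_pi_iff.1 (hfo n) x (mem_iInter.1 hx n)
  refine ⟨Σ n, I n, inferInstance, fun k => k.2, fun k => u k.1 k.2, fun k => hu k.1 k.2 k.2.2, ?_⟩
  exact fun y hy => mem_iInter.2 fun n => hIu n fun i hi => hy ⟨n, i, hi⟩

theorem IsRaikovCauchy.le_nhds_gdeltaTopology_pi {ι : Type u} {G : ι → Type*}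
    [∀ i, Group (G i)] [∀ i, TopologicalSpace (G i)] [∀ i, IsTopologicalGroup (G i)]
    {F : Filter (∀ i, G i)} [F.NeBot] (hF : IsRaikovCauchy (gdeltaTopology inferInstance) F)
    {x : ∀ i, G i} (hx : ∀ i, F.map (Function.eval i) ≤ 𝓝 (x i)) :
    F ≤ @nhds _ (gdeltaTopology inferInstance) x := by
  intro A hA
  obtain ⟨s, hs, hxs, hsA⟩ := mem_nhds_gdeltaTopology_iff.1 hA
  obtain ⟨K, _, j, u, hu, hus⟩ := hs.exists_countable_box_subset hxs
  choose W hWo hW1 hWu using fun k =>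
    exists_open_nhds_one_smul_mul_subset ((hu k).1.mem_nhds (hu k).2)
  have hP : ⋂ k, Function.eval (j k) ⁻¹' W k ∈ @nhds _ (gdeltaTopology inferInstance) 1 :=
    mem_nhds_gdeltaTopology_iff.2
      ⟨_, .iInter_of_isOpen fun k => (hWo k).preimage (continuous_apply (j k)),
        mem_iInter.2 fun k => hW1 k, subset_rfl⟩
  obtain ⟨S, hSF, hSP⟩ := hF _ hP
  refine mem_of_superset hSF fun b hb => hsA (hus fun k => ?_)
  have hxW : Function.eval (j k) ⁻¹' (x (j k) • W k) ∈ F :=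
    hx (j k) (((hWo k).smul _).mem_nhds (mem_smul_set.2 ⟨1, hW1 k, mul_one _⟩))
  obtain ⟨a, haS, ha⟩ := Filter.nonempty_of_mem (inter_mem hSF hxW)
  have hb_eq : b (j k) = a (j k) * (a⁻¹ * b) (j k) := by simp
  rw [hb_eq]
  exact hWu k (mul_mem_mul ha (mem_iInter.1 (hSP a haS b hb).2 k))

/-- The Cartesian product of an arbitrary family of `G_δ`-complete
topological groups is `G_δ`-complete. -/
theorem stmt11 {ι : Type*} (G : ι → Type*) [∀ i, Group (G i)]
    [∀ i, TopologicalSpace (G i)] [∀ i, IsTopologicalGroup (G i)]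
    (h : ∀ i, GDeltaComplete (G i)) :
    GDeltaComplete (∀ i, G i) := by
  intro F _ hF
  have hcoord : ∀ i, ∃ xi, F.map (Function.eval i) ≤ 𝓝 xi := fun i => by
    obtain ⟨xi, hxi⟩ := h i _ inferInstance <|
      IsRaikovCauchy.map hF (Pi.evalMonoidHom G i) (continuous_apply i).gdeltaTopology
    exact ⟨xi, hxi.trans (nhds_mono (gdeltaTopology_le _))⟩
  choose x hx using hcoord
  exact ⟨x, IsRaikovCauchy.le_nhds_gdeltaTopology_pi hF hx⟩
end

section
/- Let S be an uncountable set and for each s ∈ S let G_s be a nontrivial topological group with identity e_s. Then the subgroup G₀ = {(x_s) ∈ ∏_s G_s : x_s ≠ e_s for at most countably many s} of G = ∏_s G_s is G_δ-dense in G: G₀ meets every nonempty G_δ-subset of G. -/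
/-! A `G_δ` set around a point `y` of a product is determined by countably many coordinates:
each open set contains a basic neighbourhood of `y` constraining finitely many coordinates.
Resetting all other coordinates of `y` to the identity therefore stays inside the `G_δ` set. -/

open Set

section Product

variable {S : Type*} {X : S → Type*} [∀ s, TopologicalSpace (X s)]

theorem exists_finset_pi_singleton_subset_of_isOpen {U : Set (∀ s, X s)} (hU : IsOpen U)
    {y : ∀ s, X s} (hy : y ∈ U) : ∃ I : Finset S, (I : Set S).pi (fun s => {y s}) ⊆ U := by
  obtain ⟨I, u, hu, hsub⟩ := isOpen_pi_iff.mp hU y hy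
  refine ⟨I, fun z hz => hsub fun s hs => ?_⟩
  rw [mem_singleton_iff.mp (hz s hs)]
  exact (hu s hs).2

theorem exists_countable_pi_singleton_subset_iInter {ι : Type*} [Countable ι]
    {f : ι → Set (∀ s, X s)} (hf : ∀ n, IsOpen (f n)) {y : ∀ s, X s} (hy : y ∈ ⋂ n, f n) :
    ∃ T : Set S, T.Countable ∧ T.pi (fun s => {y s}) ⊆ ⋂ n, f n := by
  choose I hI using fun n =>
    exists_finset_pi_singleton_subset_of_isOpen (hf n) (mem_iInter.mp hy n)
  refine ⟨⋃ n, (I n : Set S), countable_iUnion fun n => (I n).countable_toSet, ?_⟩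
  exact subset_iInter fun n => (pi_mono' (fun _ _ => le_rfl) (subset_iUnion _ n)).trans (hI n)

end Product

theorem stmt14_general {S : Type*} (G : S → Type*) [∀ s, Group (G s)]
    [∀ s, TopologicalSpace (G s)]
    (f : ℕ → Set (∀ s, G s)) (hf : ∀ n, IsOpen (f n))
    (hne : (⋂ n, f n).Nonempty) :
    ∃ x ∈ ⋂ n, f n, {s | x s ≠ 1}.Countable := by
  classical
  obtain ⟨y, hy⟩ := hne
  obtain ⟨T, hT, hsub⟩ := exists_countable_pi_singleton_subset_iInter hf hy
  refine ⟨T.piecewise y 1, hsub fun s hs => ?_, hT.mono fun s hs => ?_⟩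
  · exact piecewise_eq_of_mem T y 1 hs
  · by_contra hsT
    exact hs (piecewise_eq_of_notMem T y 1 hsT)

/-- For an uncountable index set `S` and nontrivial topological groups
`G_s`, the subgroup of the product `∏_s G_s` consisting of all elements with at most
countably many nonidentity coordinates is `G_δ`-dense: it meets every nonempty
`G_δ`-subset of the product. -/
theorem stmt14 {S : Type*} [Uncountable S] (G : S → Type*) [∀ s, Group (G s)]
    [∀ s, TopologicalSpace (G s)] [∀ s, IsTopologicalGroup (G s)]
    [∀ s, Nontrivial (G s)]
    (f : ℕ → Set (∀ s, G s)) (hf : ∀ n, IsOpen (f n))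
    (hne : (⋂ n, f n).Nonempty) :
    ∃ x ∈ ⋂ n, f n, {s | x s ≠ 1}.Countable :=
  stmt14_general G f hf hne
end

section
/- Let (X,d) be a metric space and G a subgroup of Iso(X,d). Then the G_δ-closure of G in Iso(X,d) equals the set of all u ∈ Iso(X,d) such that for every separable subspace A ⊆ X there exists v ∈ G with v|_A = u|_A. -/
open TopologicalSpace Set

lemma isGδ_preimage_aux {α β : Type*} [TopologicalSpace α] [TopologicalSpace β]
    {s : Set β} (hs : IsGδ s) {f : α → β} (hf : Continuous f) : IsGδ (f ⁻¹' s) := by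
  obtain ⟨T, hT, hTc, rfl⟩ := hs
  refine ⟨(fun t => f ⁻¹' t) '' T, ?_, hTc.image _, ?_⟩
  · rintro t ⟨t', ht', rfl⟩
    exact (hT t' ht').preimage hf
  · ext x
    simp [Set.sInter_image]

/-- For a subgroup `G` of `Iso(X,d)` (with the topology of pointwise
convergence), the `G_δ`-closure of `G` consists exactly of those isometries `u` such
that for every separable subspace `A ⊆ X` there is `v ∈ G` agreeing with `u` on `A`. -/
theorem stmt15 {X : Type*} [MetricSpace X]
    (G : Subgroup (X ≃ᵢ X)) (u : X ≃ᵢ X) :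
    letI t : TopologicalSpace (X ≃ᵢ X) :=
      TopologicalSpace.induced (fun g : X ≃ᵢ X => (g : X → X)) inferInstance
    ((∀ A : Set (X ≃ᵢ X),
        (∃ f : ℕ → Set (X ≃ᵢ X), (∀ n, IsOpen (f n)) ∧ A = ⋂ n, f n) →
        u ∈ A → (A ∩ (G : Set (X ≃ᵢ X))).Nonempty) ↔
      (∀ A : Set X, TopologicalSpace.SeparableSpace A →
        ∃ v ∈ G, ∀ x ∈ A, v x = u x)) := by
  letI t : TopologicalSpace (X ≃ᵢ X) :=
    TopologicalSpace.induced (fun g : X ≃ᵢ X => (g : X → X)) inferInstance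
  have hcoe : Continuous (fun g : X ≃ᵢ X => (g : X → X)) := continuous_induced_dom
  have heval : ∀ x : X, Continuous (fun g : X ≃ᵢ X => g x) :=
    fun x => (continuous_apply x).comp hcoe
  constructor
  · intro h A hA
    haveI := hA
    obtain ⟨c, hc, hAc⟩ := IsSeparable.of_subtype A
    have hGδ : IsGδ (⋂ x ∈ c, {v : X ≃ᵢ X | v x = u x}) := by
      refine IsGδ.biInter hc (fun x hx => ?_)
      have : {v : X ≃ᵢ X | v x = u x} = (fun v : X ≃ᵢ X => v x) ⁻¹' {u x} := by
        ext v; simp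
      rw [this]
      exact isGδ_preimage_aux isClosed_singleton.isGδ (heval x)
    obtain ⟨f, hf, hSf⟩ := hGδ.eq_iInter_nat
    obtain ⟨v, hvS, hvG⟩ := h _ ⟨f, hf, hSf⟩ (by simp)
    refine ⟨v, hvG, fun x hx => ?_⟩
    have heq : Set.EqOn (v : X → X) u c := fun y hy => by
      simpa using mem_iInter₂.1 hvS y hy
    exact heq.closure v.continuous u.continuous (hAc hx)
  · rintro h A ⟨f, hf, hAf⟩ huA
    have key : ∀ n, ∃ F : Finset X, ∀ v : X ≃ᵢ X, (∀ x ∈ F, v x = u x) → v ∈ f n := by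
      intro n
      have hu : u ∈ f n := by rw [hAf] at huA; exact mem_iInter.1 huA n
      obtain ⟨O, hO, hfO⟩ := isOpen_induced_iff.1 (hf n)
      obtain ⟨I, U, hU, hsub⟩ := isOpen_pi_iff.1 hO _ (by rw [← hfO] at hu; exact hu)
      refine ⟨I, fun v hv => ?_⟩
      have : (v : X → X) ∈ (I : Set X).pi U := by
        intro x hx
        rw [hv x hx]
        exact (hU x hx).2
      rw [← hfO]
      exact hsub this
    choose F hF using key
    have hDc : (⋃ n, (F n : Set X)).Countable := countable_iUnion fun n => (F n).countable_toSet
    haveI := hDc.to_subtype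
    obtain ⟨v, hvG, hv⟩ := h (⋃ n, (F n : Set X)) inferInstance
    refine ⟨v, ?_, hvG⟩
    rw [hAf]
    exact mem_iInter.2 fun n => hF n v (fun x hx => hv x (mem_iUnion.2 ⟨n, hx⟩))
end
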